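/- arXiv:2011.13575 — 4 statements merged into one kernel-verified Lean document; each statement's English description precedes it below -/
import Mathlib

section
/- An invertible matrix A with polar decomposition A = VQ (V unitary, Q positive definite) is normal if and only if A = Q^{1/2} V Q^{1/2}. -/
/-!
For `a = u * q` with `u` unitary and `q ≥ 0` we have `star a * a = q * q` and
`a * star a = u * (q * q) * star u`, so `a` is normal iff `u` commutes with `q * q`.
Square roots are continuous functions of their argument, so whatever commutes with `q * q`
commutes with `q` and with `√q`; hence this is equivalent to `u * √q = √q * u`, which, after
cancelling the invertible `√q` on the right, is `u * q = √q * u * √q`.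
-/

open Matrix
open scoped ComplexOrder

/-- The old Mathlib `Matrix.PosSemidef.sqrt` (removed), spelled out with its old definition. -/
noncomputable def Matrix.PosSemidef.oldSqrt {n : Type*} [Fintype n] [DecidableEq n]
    {A : Matrix n n ℂ} (hA : A.PosSemidef) : Matrix n n ℂ :=
  hA.1.eigenvectorUnitary.1 * diagonal ((↑) ∘ (Real.sqrt ·) ∘ hA.1.eigenvalues) *
    (star hA.1.eigenvectorUnitary : Matrix n n ℂ)

section PolarDecomposition

variable {A : Type*} [PartialOrder A] [Ring A] [StarRing A] [TopologicalSpace A]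
  [StarOrderedRing A] [Algebra ℝ A] [ContinuousFunctionalCalculus ℝ A IsSelfAdjoint]
  [NonnegSpectrumClass ℝ A] [IsTopologicalRing A] [T2Space A]

theorem Commute.sqrt_right {a b : A} (h : Commute b a) : Commute b (CFC.sqrt a) := by
  rw [CFC.sqrt_eq_cfc]
  exact (h.symm.cfc_nnreal NNReal.sqrt).symm

theorem commute_sqrt_iff {a b : A} (ha : 0 ≤ a) : Commute b (CFC.sqrt a) ↔ Commute b a := by
  refine ⟨fun h ↦ ?_, Commute.sqrt_right⟩
  rw [← CFC.sqrt_mul_sqrt_self a ha]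
  exact h.mul_right h

theorem commute_mul_self_iff {a b : A} (ha : 0 ≤ a) : Commute b (a * a) ↔ Commute b a := by
  refine ⟨fun h ↦ ?_, fun h ↦ h.mul_right h⟩
  simpa only [CFC.sqrt_mul_self a ha] using h.sqrt_right

theorem isStarNormal_mul_iff_commute {u q : A} (hu : u ∈ unitary A) (hq : 0 ≤ q) :
    IsStarNormal (u * q) ↔ Commute u q := by
  have hq_star : star q = q := (IsSelfAdjoint.of_nonneg hq).star_eq
  have hu_star : star u * u = 1 := Unitary.star_mul_self_of_mem hu
  have hleft : star (u * q) * (u * q) = q * q := by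
    rw [star_mul, hq_star, mul_assoc, ← mul_assoc (star u), hu_star, one_mul]
  have hright : u * q * star (u * q) = u * (q * q) * star u := by
    rw [star_mul, hq_star]
    simp only [mul_assoc]
  rw [isStarNormal_iff, commute_iff_eq, hleft, hright, eq_comm,
    ← commute_unitary_iff_star_right_conjugate hu, commute_mul_self_iff hq]

theorem mul_eq_sqrt_mul_mul_sqrt_iff_commute {u q : A} (hq : 0 ≤ q) (hq_unit : IsUnit q) :
    u * q = CFC.sqrt q * u * CFC.sqrt q ↔ Commute u q := by
  have hs_unit : IsUnit (CFC.sqrt q) := (CFC.isUnit_sqrt_iff q hq).mpr hq_unit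
  nth_rw 1 [← CFC.sqrt_mul_sqrt_self q hq]
  rw [← mul_assoc, hs_unit.mul_left_inj, ← commute_iff_eq, commute_sqrt_iff hq]

theorem isStarNormal_mul_iff_eq_sqrt_mul_mul_sqrt {u q : A} (hu : u ∈ unitary A) (hq : 0 ≤ q)
    (hq_unit : IsUnit q) :
    IsStarNormal (u * q) ↔ u * q = CFC.sqrt q * u * CFC.sqrt q := by
  rw [isStarNormal_mul_iff_commute hu hq, mul_eq_sqrt_mul_mul_sqrt_iff_commute hq hq_unit]

end PolarDecomposition

open scoped MatrixOrder in
theorem Matrix.PosSemidef.oldSqrt_eq_sqrt {n : Type*} [Fintype n] [DecidableEq n]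
    {A : Matrix n n ℂ} (hA : A.PosSemidef) : hA.oldSqrt = CFC.sqrt A := by
  rw [CFC.sqrt_eq_cfc, cfc_nnreal_eq_real _ A hA.nonneg, hA.1.cfc_eq, IsHermitian.cfc,
    Unitary.conjStarAlgAut_apply, PosSemidef.oldSqrt]
  congr 3
  funext i
  simp [hA.eigenvalues_nonneg i]

theorem normal_iff_symmetric_polar_general {n : ℕ} (A V Q : Matrix (Fin n) (Fin n) ℂ)
    (hV : Vᴴ * V = 1) (hQ : Q.PosDef) (hVQ : A = V * Q) :
    A * Aᴴ = Aᴴ * A ↔ A = hQ.posSemidef.oldSqrt * V * hQ.posSemidef.oldSqrt := by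
  have hV_unitary : V ∈ unitary (Matrix (Fin n) (Fin n) ℂ) := mem_unitaryGroup_iff'.mpr hV
  subst hVQ
  open scoped MatrixOrder in
  rw [hQ.posSemidef.oldSqrt_eq_sqrt, ← isStarNormal_mul_iff_eq_sqrt_mul_mul_sqrt hV_unitary
    hQ.posSemidef.nonneg hQ.isUnit, isStarNormal_iff]
  exact Commute.symm_iff

/-- An invertible matrix `A` with polar decomposition `A = VQ` (`V` unitary, `Q`
positive definite) is normal if and only if `A = Q^{1/2} V Q^{1/2}`. -/
theorem normal_iff_symmetric_polar {n : ℕ} (A V Q : Matrix (Fin n) (Fin n) ℂ)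
    (hA : IsUnit A) (hV : Vᴴ * V = 1) (hQ : Q.PosDef) (hVQ : A = V * Q) :
    A * Aᴴ = Aᴴ * A ↔ A = hQ.posSemidef.oldSqrt * V * hQ.posSemidef.oldSqrt :=
  normal_iff_symmetric_polar_general A V Q hV hQ hVQ
end

section
/- If U and V are unitary matrices that are both strictly accretive, then the spectrum of U*V contains no negative real numbers (indeed no nonpositive real numbers other than excluded by unitarity: every eigenvalue of U*V has the form e^{iθ} with θ ∈ (−π, π)). -/
open Matrix
open scoped ComplexOrder

/-!
If `A` and `B` are strictly accretive and `A B v = c v` with `v ≠ 0` and `c` real, put `w = B v`,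
which is nonzero since `Re ⟨v, B v⟩ > 0`. Then `⟨w, A w⟩ = c ⟨w, v⟩ = c · conj ⟨v, B v⟩` has real
part `c · Re ⟨v, B v⟩`, which must be positive; hence `c > 0`. Apply this to `A = Uᴴ`, which is strictly accretive along with `U`.
-/

namespace Matrix

variable {ι 𝕜 : Type*} [RCLike 𝕜]

theorem exists_mulVec_eq_smul_of_mem_spectrum {K : Type*} [Field K] [Fintype ι] [DecidableEq ι]
    {A : Matrix ι ι K} {μ : K} (hμ : μ ∈ spectrum K A) : ∃ v ≠ 0, A *ᵥ v = μ • v := by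
  rw [← spectrum_toLin', ← Module.End.hasEigenvalue_iff_mem_spectrum] at hμ
  obtain ⟨v, hv⟩ := hμ.exists_hasEigenvector
  exact ⟨v, hv.2, Module.End.mem_eigenspace_iff.mp hv.1⟩

def IsStrictlyAccretive (M : Matrix ι ι 𝕜) : Prop :=
  ((2⁻¹ : 𝕜) • (M + Mᴴ)).PosDef

namespace IsStrictlyAccretive

variable {A B M : Matrix ι ι 𝕜}

theorem conjTranspose (hM : M.IsStrictlyAccretive) : Mᴴ.IsStrictlyAccretive := by
  rwa [IsStrictlyAccretive, conjTranspose_conjTranspose, add_comm]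

variable [Fintype ι]

theorem re_dotProduct_mulVec_pos (hM : M.IsStrictlyAccretive) {v : ι → 𝕜} (hv : v ≠ 0) :
    0 < RCLike.re (star v ⬝ᵥ M *ᵥ v) := by
  have h := RCLike.pos_iff.mp (hM.dotProduct_mulVec_pos hv)
  have hconj : star v ⬝ᵥ Mᴴ *ᵥ v = star (star v ⬝ᵥ M *ᵥ v) := by
    rw [dotProduct_mulVec, ← star_mulVec, star_dotProduct]
  rw [smul_mulVec, dotProduct_smul, add_mulVec, dotProduct_add, hconj] at h
  simpa [RCLike.smul_re] using h.1

theorem mulVec_ne_zero (hM : M.IsStrictlyAccretive) {v : ι → 𝕜} (hv : v ≠ 0) : M *ᵥ v ≠ 0 := by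
  intro h
  simpa [h] using hM.re_dotProduct_mulVec_pos hv

theorem ofReal_notMem_spectrum_mul [DecidableEq ι] (hA : A.IsStrictlyAccretive)
    (hB : B.IsStrictlyAccretive) {c : ℝ} (hc : c ≤ 0) : (c : 𝕜) ∉ spectrum 𝕜 (A * B) := by
  intro hmem
  obtain ⟨v, hv, hAB⟩ := exists_mulVec_eq_smul_of_mem_spectrum hmem
  set w := B *ᵥ v
  have hAw : A *ᵥ w = (c : 𝕜) • v := by rw [mulVec_mulVec, hAB]
  have re_eq : RCLike.re (star w ⬝ᵥ A *ᵥ w) = c * RCLike.re (star v ⬝ᵥ B *ᵥ v) := by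
    rw [hAw, dotProduct_smul, star_dotProduct]
    simp [w]
  have hpos := hA.re_dotProduct_mulVec_pos (hB.mulVec_ne_zero hv)
  rw [re_eq] at hpos
  exact hpos.not_ge (mul_nonpos_of_nonpos_of_nonneg hc (hB.re_dotProduct_mulVec_pos hv).le)

end IsStrictlyAccretive

end Matrix

theorem spectrum_unitary_accretive_product_avoids_nonpos_general {n : ℕ}
    (U V : Matrix (Fin n) (Fin n) ℂ)
    (hUa : Matrix.PosDef ((2⁻¹ : ℂ) • (U + Uᴴ)))
    (hVa : Matrix.PosDef ((2⁻¹ : ℂ) • (V + Vᴴ))) :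
    ∀ c : ℝ, c ≤ 0 → (c : ℂ) ∉ spectrum ℂ (Uᴴ * V) := fun _ hc =>
  IsStrictlyAccretive.ofReal_notMem_spectrum_mul (IsStrictlyAccretive.conjTranspose hUa) hVa hc

/-- If `U` and `V` are unitary matrices that are both strictly accretive, then the
spectrum of `Uᴴ V` contains no nonpositive real numbers. -/
theorem spectrum_unitary_accretive_product_avoids_nonpos {n : ℕ}
    (U V : Matrix (Fin n) (Fin n) ℂ)
    (hU : Uᴴ * U = 1) (hV : Vᴴ * V = 1)
    (hUa : Matrix.PosDef ((2⁻¹ : ℂ) • (U + Uᴴ)))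
    (hVa : Matrix.PosDef ((2⁻¹ : ℂ) • (V + Vᴴ))) :
    ∀ c : ℝ, c ≤ 0 → (c : ℂ) ∉ spectrum ℂ (Uᴴ * V) :=
  spectrum_unitary_accretive_product_avoids_nonpos_general U V hUa hVa
end

section
/- If A, B are strictly accretive and simultaneously diagonalizable by congruence, i.e., A = TᴴD_A T and B = TᴴD_B T with T invertible and D_A, D_B diagonal, then A#B = Tᴴ(D_A # D_B)T, where # denotes the geometric mean of strictly accretive matrices. -/
open Matrix
open scoped ComplexOrder

namespace Matrix

variable {m n R : Type*} [Fintype n] [CommRing R] [StarRing R]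

lemma smul_add_conjTranspose_conjTranspose_mul_mul (c : R)
    (M : Matrix n n R) (T : Matrix n m R) :
    c • (Tᴴ * M * T + (Tᴴ * M * T)ᴴ) = Tᴴ * (c • (M + Mᴴ)) * T := by
  simp only [conjTranspose_mul, conjTranspose_conjTranspose, Matrix.mul_smul, Matrix.smul_mul,
    Matrix.mul_add, Matrix.add_mul, Matrix.mul_assoc]

lemma conjTranspose_mul_mul_mul_inv_mul [DecidableEq n] {T : Matrix n n R}
    (hT : IsUnit T) (X D : Matrix n n R) :
    (Tᴴ * X * T) * (Tᴴ * D * T)⁻¹ * (Tᴴ * X * T) = Tᴴ * (X * D⁻¹ * X) * T := by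
  have hdet : IsUnit T.det := (isUnit_iff_isUnit_det T).mp hT
  have hdetH : IsUnit Tᴴ.det := by rwa [det_conjTranspose, isUnit_star]
  simp only [mul_inv_rev, mul_assoc, mul_nonsing_inv_cancel_left _ _ hdet,
    nonsing_inv_mul_cancel_left _ _ hdetH]

end Matrix

theorem geometricMean_simultaneous_diag_congruence_general {n : ℕ}
    (A B T DA DB G GD : Matrix (Fin n) (Fin n) ℂ)
    (hT : IsUnit T)
    (hAeq : A = Tᴴ * DA * T) (hBeq : B = Tᴴ * DB * T)
    (hGuniq : ∀ G' : Matrix (Fin n) (Fin n) ℂ,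
      Matrix.PosDef ((2⁻¹ : ℂ) • (G' + G'ᴴ)) → G' * A⁻¹ * G' = B → G' = G)
    (hGD : Matrix.PosDef ((2⁻¹ : ℂ) • (GD + GDᴴ)))
    (hGDsol : GD * DA⁻¹ * GD = DB) :
    G = Tᴴ * GD * T := by
  have haccretive : ((2⁻¹ : ℂ) • (Tᴴ * GD * T + (Tᴴ * GD * T)ᴴ)).PosDef := by
    rw [smul_add_conjTranspose_conjTranspose_mul_mul]
    exact hGD.conjTranspose_mul_mul_same (mulVec_injective_iff_isUnit.mpr hT)
  have hsol : (Tᴴ * GD * T) * A⁻¹ * (Tᴴ * GD * T) = B := by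
    rw [hAeq, conjTranspose_mul_mul_mul_inv_mul hT, hGDsol, hBeq]
  exact (hGuniq _ haccretive hsol).symm

/-- If `A, B` are strictly accretive and simultaneously diagonalizable by congruence,
`A = Tᴴ D_A T`, `B = Tᴴ D_B T` with `T` invertible and `D_A, D_B` diagonal, then
`A # B = Tᴴ (D_A # D_B) T`, where the geometric mean `#` of strictly accretive
matrices is characterized as the unique strictly accretive solution `G` of
`G A⁻¹ G = B`. -/
theorem geometricMean_simultaneous_diag_congruence {n : ℕ}
    (A B T DA DB G GD : Matrix (Fin n) (Fin n) ℂ)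
    (hA : Matrix.PosDef ((2⁻¹ : ℂ) • (A + Aᴴ)))
    (hB : Matrix.PosDef ((2⁻¹ : ℂ) • (B + Bᴴ)))
    (hT : IsUnit T) (hDA : DA.IsDiag) (hDB : DB.IsDiag)
    (hAeq : A = Tᴴ * DA * T) (hBeq : B = Tᴴ * DB * T)
    (hG : Matrix.PosDef ((2⁻¹ : ℂ) • (G + Gᴴ)))
    (hGsol : G * A⁻¹ * G = B)
    (hGuniq : ∀ G' : Matrix (Fin n) (Fin n) ℂ,
      Matrix.PosDef ((2⁻¹ : ℂ) • (G' + G'ᴴ)) → G' * A⁻¹ * G' = B → G' = G)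
    (hGD : Matrix.PosDef ((2⁻¹ : ℂ) • (GD + GDᴴ)))
    (hGDsol : GD * DA⁻¹ * GD = DB) :
    G = Tᴴ * GD * T :=
  geometricMean_simultaneous_diag_congruence_general A B T DA DB G GD hT hAeq hBeq hGuniq hGD hGDsol
end

section
/- Let a ∈ ℝⁿ be the vector of logarithms of the eigenvalues of a positive definite matrix, sorted by decreasing absolute value, |a₁| ≥ ... ≥ |aₙ|, and let x̂ ∈ ℝⁿ be defined by x̂ᵢ = aᵢ for the r entries of a with largest absolute value and x̂ᵢ = 0 otherwise. Then for any x ∈ ℝⁿ with at most r nonzero entries, |a − x̂| ≺_w |a − x|; that is, x̂ minimizes |a − x| in the weak submajorization preorder among all vectors x with at most r nonzero entries. -/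
open Finset

/-- `u` is weakly submajorized by `v` (`u ≺_w v`): for every `k`, the sum of any `k`
entries of `u` is at most the sum of some `k` entries of `v`; equivalently, the sum of
the `k` largest entries of `u` is at most the sum of the `k` largest entries of `v`. -/
def WeaklySubmajorizes {n : ℕ} (u v : Fin n → ℝ) : Prop :=
  ∀ s : Finset (Fin n), ∃ t : Finset (Fin n), t.card = s.card ∧ ∑ i ∈ s, u i ≤ ∑ i ∈ t, v i

/-- Upper bound on the k-th smallest element of `C` when the complement of `C`
is contained in `S`. -/
private lemma kth_small_le {n : ℕ} (C S : Finset (Fin n))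
    (hCS : ∀ i : Fin n, i ∉ C → i ∈ S) {c : ℕ} (hc : C.card = c) (k : Fin c) :
    ((C.orderEmbOfFin hc) k : ℕ) ≤ (k : ℕ) + S.card := by
  set e := C.orderEmbOfFin hc with he
  set i := e k with hi
  have hsplit := Finset.card_filter_add_card_filter_not
      (s := Finset.Iic i) (p := fun b => b ∈ C)
  have hIic : (Finset.Iic i).card = (i : ℕ) + 1 := Fin.card_Iic i
  have h1 : (Finset.Iic i).filter (fun b => b ∈ C) = (Finset.Iic k).image e := by
    ext b
    simp only [Finset.mem_filter, Finset.mem_Iic, Finset.mem_image]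
    constructor
    · rintro ⟨hbi, hbC⟩
      have : b ∈ Set.range e := by
        rw [Finset.range_orderEmbOfFin]; exact hbC
      obtain ⟨j, hj⟩ := this
      refine ⟨j, ?_, hj⟩
      have : e j ≤ e k := by rw [hj]; exact hbi
      exact e.le_iff_le.mp this
    · rintro ⟨j, hj, rfl⟩
      exact ⟨e.monotone hj, Finset.orderEmbOfFin_mem C hc j⟩
  have h1c : ((Finset.Iic i).filter (fun b => b ∈ C)).card = (k : ℕ) + 1 := by
    rw [h1, Finset.card_image_of_injective _ e.injective, Fin.card_Iic]
  have h2 : (Finset.Iic i).filter (fun b => ¬ b ∈ C) ⊆ S := by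
    intro b hb
    rw [Finset.mem_filter] at hb
    exact hCS b hb.2
  have h2c : ((Finset.Iic i).filter (fun b => ¬ b ∈ C)).card ≤ S.card :=
    Finset.card_le_card h2
  omega

/-- Lower bound on the k-th smallest element of a finset all of whose elements
are `≥ r`. -/
private lemma kth_big_ge {n r : ℕ} {s : Finset (Fin n)}
    (hr : ∀ i ∈ s, r ≤ (i : ℕ)) {m : ℕ} (hm : s.card = m) (k : Fin m) :
    r + (k : ℕ) ≤ ((s.orderEmbOfFin hm) k : ℕ) := by
  set g := s.orderEmbOfFin hm with hg
  obtain ⟨kv, hkv⟩ := k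
  induction kv with
  | zero =>
    simpa using hr _ (Finset.orderEmbOfFin_mem s hm ⟨0, hkv⟩)
  | succ j ih =>
    have hj : j < m := Nat.lt_of_succ_lt hkv
    have hlt : g ⟨j, hj⟩ < g ⟨j + 1, hkv⟩ := by
      apply g.strictMono
      exact Fin.mk_lt_mk.mpr (Nat.lt_succ_self j)
    have hthis : r + j ≤ (g ⟨j, hj⟩ : ℕ) := ih hj
    have hlt' : (g ⟨j, hj⟩ : ℕ) < (g ⟨j + 1, hkv⟩ : ℕ) := hlt
    show r + (j + 1) ≤ (g ⟨j + 1, hkv⟩ : ℕ)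
    omega

/-- Among vectors `x ∈ ℝⁿ` with at most `r` nonzero entries, the one minimizing
`|a - x|` in the weak submajorization preorder is obtained by keeping the `r`
largest-magnitude entries of `a` (here `a` is sorted by decreasing absolute value,
and `x̂ᵢ = aᵢ` for `i < r`, `x̂ᵢ = 0` otherwise). -/
theorem best_logRank_approximation {n : ℕ} (a : Fin n → ℝ)
    (hsorted : ∀ i j : Fin n, i ≤ j → |a j| ≤ |a i|) (r : ℕ)
    (x : Fin n → ℝ) (hx : (Finset.univ.filter fun i => x i ≠ 0).card ≤ r) :
    WeaklySubmajorizes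
      (fun i => |a i - (if (i : ℕ) < r then a i else 0)|)
      (fun i => |a i - x i|) := by
  intro s
  classical
  set S : Finset (Fin n) := Finset.univ.filter (fun i => x i ≠ 0) with hS
  set C : Finset (Fin n) := Finset.univ.filter (fun i => x i = 0) with hC
  have hCS : ∀ i : Fin n, i ∉ C → i ∈ S := by
    intro i hi
    simp only [hC, Finset.mem_filter, Finset.mem_univ, true_and] at hi
    simp [hS, hi]
  set s' : Finset (Fin n) := s.filter (fun i => ¬ ((i : ℕ) < r)) with hs'
  set m : ℕ := s'.card with hm
  -- LHS sum equals sum over s'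
  have hsum1 : ∑ i ∈ s, |a i - (if (i : ℕ) < r then a i else 0)| = ∑ i ∈ s', |a i| := by
    rw [show ∑ i ∈ s', |a i| = ∑ i ∈ s', |a i - (if (i : ℕ) < r then a i else 0)| from
      Finset.sum_congr rfl (by
        intro i hi
        rw [hs', Finset.mem_filter] at hi
        simp [hi.2])]
    symm
    apply Finset.sum_subset (Finset.filter_subset _ _)
    intro i hi hnot
    simp only [Finset.mem_filter, not_and, not_not] at hnot
    have : (i : ℕ) < r := hnot hi
    simp [this]
  have hscard : s.card ≤ Fintype.card (Fin n) := Finset.card_le_univ s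
  by_cases hm0 : m = 0
  · -- trivial case
    obtain ⟨t, hts, htc⟩ := Finset.exists_superset_card_eq (s := (∅ : Finset (Fin n)))
      (Nat.zero_le s.card) hscard
    refine ⟨t, htc, ?_⟩
    rw [hsum1, hs']
    have : s' = ∅ := Finset.card_eq_zero.mp hm0
    rw [hs'] at this
    rw [this]
    simp
    exact Finset.sum_nonneg (fun i _ => abs_nonneg _)
  · have hmpos : 0 < m := Nat.pos_of_ne_zero hm0
    set g := s'.orderEmbOfFin hm.symm with hg
    have hge : ∀ k : Fin m, r + (k : ℕ) ≤ (g k : ℕ) := by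
      intro k
      apply kth_big_ge
      intro i hi
      rw [hs', Finset.mem_filter] at hi
      omega
    -- m ≤ C.card
    have hrn : r + m ≤ n := by
      have := hge ⟨m - 1, by omega⟩
      have h2 : ((g ⟨m - 1, by omega⟩ : Fin n) : ℕ) < n := (g _).isLt
      simp at this
      omega
    have hCcard : m ≤ C.card := by
      have := Finset.card_filter_add_card_filter_not
        (s := (Finset.univ : Finset (Fin n))) (p := fun i => x i = 0)
      have hcu : (Finset.univ : Finset (Fin n)).card = n := by simp
      have hSC : (Finset.univ.filter fun i => ¬ x i = 0).card ≤ r := by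
        simpa using hx
      rw [← hC] at this
      omega
    set e := C.orderEmbOfFin (rfl : C.card = C.card) with he
    set f : Fin m → Fin n := fun k => e (Fin.castLE hCcard k) with hf
    have hfinj : Function.Injective f := fun i j h => by
      have := e.injective h
      exact Fin.castLE_injective hCcard this
    have hfk : ∀ k : Fin m, f k ≤ g k := by
      intro k
      rw [Fin.le_def]
      have h1 : (f k : ℕ) ≤ (k : ℕ) + S.card :=
        kth_small_le C S hCS rfl (Fin.castLE hCcard k)
      have h2 := hge k
      have h3 : S.card ≤ r := hx
      omega
    set t₀ : Finset (Fin n) := Finset.univ.image f with ht₀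
    have ht₀card : t₀.card = m := by
      rw [ht₀, Finset.card_image_of_injective _ hfinj]; simp
    have ht₀C : ∀ j ∈ t₀, x j = 0 := by
      intro j hj
      rw [ht₀, Finset.mem_image] at hj
      obtain ⟨k, _, rfl⟩ := hj
      have : f k ∈ C := Finset.orderEmbOfFin_mem C rfl _
      rw [hC, Finset.mem_filter] at this
      exact this.2
    have hms : m ≤ s.card := by
      rw [hm]; exact Finset.card_le_card (Finset.filter_subset _ _)
    obtain ⟨t, htsub, htcard⟩ := Finset.exists_superset_card_eq (s := t₀)
      (le_trans (le_of_eq ht₀card) hms) hscard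
    refine ⟨t, htcard, ?_⟩
    rw [hsum1]
    -- ∑ s' |a| = ∑_{k} |a (g k)|
    have hs'img : s' = Finset.univ.image (fun k => g k) := by
      ext i
      simp only [Finset.mem_image, Finset.mem_univ, true_and]
      constructor
      · intro hi
        have : i ∈ Set.range g := by rw [Finset.range_orderEmbOfFin]; exact hi
        obtain ⟨k, hk⟩ := this
        exact ⟨k, hk⟩
      · rintro ⟨k, rfl⟩
        exact Finset.orderEmbOfFin_mem s' hm.symm k
    calc ∑ i ∈ s', |a i|
        = ∑ k : Fin m, |a (g k)| := by
          rw [hs'img, Finset.sum_image (fun i _ j _ h => g.injective h)]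
      _ ≤ ∑ k : Fin m, |a (f k)| := by
          apply Finset.sum_le_sum
          intro k _
          exact hsorted (f k) (g k) (hfk k)
      _ = ∑ j ∈ t₀, |a j| := by
          rw [ht₀, Finset.sum_image (fun i _ j _ h => hfinj h)]
      _ = ∑ j ∈ t₀, |a j - x j| := by
          apply Finset.sum_congr rfl
          intro j hj
          rw [ht₀C j hj, sub_zero]
      _ ≤ ∑ j ∈ t, |a j - x j| := by
          apply Finset.sum_le_sum_of_subset_of_nonneg htsub
          intro j _ _
          exact abs_nonneg _
end
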